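/- For every invertible 2×2 complex matrix S, every i, j ∈ {1,…,N} and every α ∈ {1,2}, the following identities hold in Ω: d(ϑᵢ^α) = i Σ_{k=1}^{N} (ξᵢ·ξ_k) ξ_k^α and d(Θᵢⱼ) = −i Σ_{k=1}^{N} (ξᵢ·ξ_k)(ξⱼ·ξ_k), where ξᵢ, ϑᵢ, Θᵢⱼ and ξᵢ·ξⱼ are defined via S as in the context. -/
import Mathlib


/-!
D = 3 supersymmetry algebra cohomology.
`R3 N = ℂ[ψ₁,…,ψ_N, χ₁,…,χ_N]`, `Om3 N` is the free module with basis
`{1, c̃₁, c̃₂, c̃₃, c̃₁c̃₂, c̃₁c̃₃, c̃₂c̃₃, c̃₁c̃₂c̃₃}` (components 0,…,7), and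
`d3` is the odd superderivation with `dc̃₁ = P`, `dc̃₂ = Q`, `dc̃₃ = S`, `d|_R = 0`.
-/

open MvPolynomial

noncomputable section

/-- The polynomial ring `ℂ[ψ₁,…,ψ_N, χ₁,…,χ_N]`; `Sum.inl i ↦ ψᵢ`, `Sum.inr i ↦ χᵢ`. -/
abbrev R3 (N : ℕ) : Type := MvPolynomial (Fin N ⊕ Fin N) ℂ

/-- `Ω`: free `R3`-module with basis
`{1, c̃₁, c̃₂, c̃₃, c̃₁c̃₂, c̃₁c̃₃, c̃₂c̃₃, c̃₁c̃₂c̃₃}` (components 0,…,7). -/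
abbrev Om3 (N : ℕ) : Type := Fin 8 → R3 N

/-- The ghost `ψᵢ`. -/
def ψ {N : ℕ} (i : Fin N) : R3 N := X (Sum.inl i)

/-- The ghost `χᵢ`. -/
def χ {N : ℕ} (i : Fin N) : R3 N := X (Sum.inr i)

/-- `P = Σ ψᵢ²`. -/
def PP (N : ℕ) : R3 N := ∑ i, ψ i ^ 2

/-- `Q = Σ χᵢ²`. -/
def QQ (N : ℕ) : R3 N := ∑ i, χ i ^ 2

/-- `S = Σ ψᵢχᵢ`. -/
def SS (N : ℕ) : R3 N := ∑ i, ψ i * χ i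

/-- The differential: the unique R-linear odd superderivation with
`dc̃₁ = P`, `dc̃₂ = Q`, `dc̃₃ = S` and `d|_R = 0`, written out in components:
`d(ω₀ + c̃₁ω₁ + c̃₂ω₂ + c̃₃ω₃ + c̃₁c̃₂ω₄ + c̃₁c̃₃ω₅ + c̃₂c̃₃ω₆ + c̃₁c̃₂c̃₃ω₇)
 = Pω₁ + Qω₂ + Sω₃ + (Pc̃₂ − Qc̃₁)ω₄ + (Pc̃₃ − Sc̃₁)ω₅ + (Qc̃₃ − Sc̃₂)ω₆
   + (Pc̃₂c̃₃ − Qc̃₁c̃₃ + Sc̃₁c̃₂)ω₇`. -/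
def d3 {N : ℕ} (ω : Om3 N) : Om3 N :=
  ![PP N * ω 1 + QQ N * ω 2 + SS N * ω 3,
    -(QQ N * ω 4) - SS N * ω 5,
    PP N * ω 4 - SS N * ω 6,
    PP N * ω 5 + QQ N * ω 6,
    SS N * ω 7,
    -(QQ N * ω 7),
    PP N * ω 7,
    0]

/-- Embedding of `R` into `Ω` (coefficient of the basis element `1`). -/
def ofR3 {N : ℕ} (r : R3 N) : Om3 N := ![r, 0, 0, 0, 0, 0, 0, 0]

/-- `ω ∼ ω'` iff `ω − ω' = dρ` for some `ρ`. -/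
def Equiv3 {N : ℕ} (ω ω' : Om3 N) : Prop := ∃ ρ, ω - ω' = d3 ρ

/-- The invariant `ξᵢ·ξⱼ = ψᵢχⱼ − χᵢψⱼ`. -/
def xidot {N : ℕ} (i j : Fin N) : R3 N := ψ i * χ j - χ i * ψ j

/-- `Θᵢⱼ = i(c̃₃(ψᵢχⱼ + ψⱼχᵢ) − c̃₁χᵢχⱼ − c̃₂ψᵢψⱼ)` as an element of `Ω`. -/
def Theta {N : ℕ} (i j : Fin N) : Om3 N :=
  ![0,
    -(C Complex.I * (χ i * χ j)),
    -(C Complex.I * (ψ i * ψ j)),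
    C Complex.I * (ψ i * χ j + ψ j * χ i),
    0, 0, 0, 0]

/-- The supersymmetry ghost `ξᵢ = (ψᵢ, iχᵢ)·S⁻¹` (row spinor, entries in `R`). -/
def xi3 {N : ℕ} (S : Matrix (Fin 2) (Fin 2) ℂ) (i : Fin N) (α : Fin 2) : R3 N :=
  C (S⁻¹ 0 α) * ψ i + C (Complex.I * S⁻¹ 1 α) * χ i

/-- `ϑᵢ = (i(c̃₃ψᵢ − c̃₁χᵢ), c̃₃χᵢ − c̃₂ψᵢ)·S⁻¹` (row spinor, entries in `Ω`). -/
def theta3 {N : ℕ} (S : Matrix (Fin 2) (Fin 2) ℂ) (i : Fin N) (α : Fin 2) : Om3 N :=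
  ![0,
    -(C (Complex.I * S⁻¹ 0 α) * χ i),
    -(C (S⁻¹ 1 α) * ψ i),
    C (Complex.I * S⁻¹ 0 α) * ψ i + C (S⁻¹ 1 α) * χ i,
    0, 0, 0, 0]

lemma key3 {N : ℕ} (i : Fin N) (a b : R3 N) :
    ∑ k, xidot i k * (a * ψ k + b * χ k)
      = a * (ψ i * SS N - χ i * PP N) + b * (ψ i * QQ N - χ i * SS N) := by
  simp only [PP, QQ, SS, xidot, mul_sub, mul_add, Finset.mul_sum,
    ← Finset.sum_sub_distrib, ← Finset.sum_add_distrib]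
  exact Finset.sum_congr rfl (fun k _ => by ring)

lemma key3' {N : ℕ} (i j : Fin N) :
    ∑ k, xidot i k * xidot j k
      = ψ i * ψ j * QQ N - (ψ i * χ j + χ i * ψ j) * SS N + χ i * χ j * PP N := by
  simp only [PP, QQ, SS, xidot, sub_mul, add_mul, Finset.mul_sum,
    ← Finset.sum_sub_distrib, ← Finset.sum_add_distrib]
  exact Finset.sum_congr rfl (fun k _ => by ring)

/-- for every invertible `S`, all `i, j` and every `α`, the
identities `d(ϑᵢ^α) = i Σ_k (ξᵢ·ξ_k) ξ_k^α` and
`d(Θᵢⱼ) = −i Σ_k (ξᵢ·ξ_k)(ξⱼ·ξ_k)` hold in `Ω`. -/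
theorem stmt12 (N : ℕ) (S : Matrix (Fin 2) (Fin 2) ℂ) (hS : IsUnit S.det)
    (i j : Fin N) (α : Fin 2) :
    d3 (theta3 S i α) = ofR3 (C Complex.I * ∑ k, xidot i k * xi3 S k α)
    ∧
    d3 (Theta i j) = ofR3 (-(C Complex.I) * ∑ k, xidot i k * xidot j k) := by
  have hI : (C Complex.I : R3 N) * C Complex.I = -1 := by
    rw [← map_mul, Complex.I_mul_I, map_neg, map_one]
  constructor
  · have hA : PP N * -(C (Complex.I * S⁻¹ 0 α) * χ i) + QQ N * -(C (S⁻¹ 1 α) * ψ i)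
        + SS N * (C (Complex.I * S⁻¹ 0 α) * ψ i + C (S⁻¹ 1 α) * χ i)
        = C Complex.I * ∑ k, xidot i k * xi3 S k α := by
      simp only [xi3]
      rw [key3 i (C (S⁻¹ 0 α)) (C (Complex.I * S⁻¹ 1 α))]
      simp only [map_mul]
      linear_combination (-(C (S⁻¹ 1 α) * (ψ i * QQ N - χ i * SS N))) * hI
    have e : d3 (theta3 S i α) =
        ![PP N * -(C (Complex.I * S⁻¹ 0 α) * χ i) + QQ N * -(C (S⁻¹ 1 α) * ψ i)
            + SS N * (C (Complex.I * S⁻¹ 0 α) * ψ i + C (S⁻¹ 1 α) * χ i),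
          -(QQ N * 0) - SS N * 0, PP N * 0 - SS N * 0, PP N * 0 + QQ N * 0,
          SS N * 0, -(QQ N * 0), PP N * 0, 0] := rfl
    rw [e, hA, ofR3]
    simp only [mul_zero, neg_zero, sub_zero, add_zero]
  · have hB : PP N * -(C Complex.I * (χ i * χ j)) + QQ N * -(C Complex.I * (ψ i * ψ j))
        + SS N * (C Complex.I * (ψ i * χ j + ψ j * χ i))
        = -(C Complex.I) * ∑ k, xidot i k * xidot j k := by
      rw [key3' i j]; ring
    have e : d3 (Theta i j) =
        ![PP N * -(C Complex.I * (χ i * χ j)) + QQ N * -(C Complex.I * (ψ i * ψ j))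
            + SS N * (C Complex.I * (ψ i * χ j + ψ j * χ i)),
          -(QQ N * 0) - SS N * 0, PP N * 0 - SS N * 0, PP N * 0 + QQ N * 0,
          SS N * 0, -(QQ N * 0), PP N * 0, 0] := rfl
    rw [e, hB, ofR3]
    simp only [mul_zero, neg_zero, sub_zero, add_zero]
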